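/- arXiv:1605.06363 — 4 statements merged into one kernel-verified Lean document; each statement's English description precedes it below -/
import Mathlib

section
/- Let $\kk$ be a field of characteristic $p > 0$, $G$ a finite group acting linearly on $V = \kk^{n+1}$ with dual basis $x_0, \ldots, x_n$ of $V^*$ such that the span of $x_1, \ldots, x_n$ is a $G$-submodule of $V^*$ (i.e. $x_0$ is a terminal variable). If $f \in \kk[V]^G$ is $G$-invariant, then so is $\Delta^i(f)$ for every $i \geq 0$, where $\Delta^i$ is the $i$-th Hasse derivative with respect to $x_0$. -/
open Polynomial

/-- Hasse derivatives commute with Taylor translation. -/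
theorem hasseDeriv_taylor_comm {R : Type*} [CommSemiring R] (r : R) (i : ℕ) (f : R[X]) :
    Polynomial.hasseDeriv i (Polynomial.taylor r f) =
      Polynomial.taylor r (Polynomial.hasseDeriv i f) := by
  ext m
  rw [hasseDeriv_coeff, taylor_coeff, taylor_coeff]
  have h := congrFun (congrArg (fun φ => (DFunLike.coe φ : R[X] → R[X]))
    (Polynomial.hasseDeriv_comp (R := R) m i)) f
  simp only [LinearMap.coe_comp, Function.comp_apply, LinearMap.smul_apply] at h
  rw [h, eval_smul, Nat.choose_symm_add, nsmul_eq_mul]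

/-- If a finite group `G` acts linearly on `V = k^{n+1}` (char `k = p`), acting on
`k[V] = (k[x₁,…,xₙ])[x₀]` by algebra automorphisms, with `x₀` a terminal variable
(each `g` fixes the span of `x₁,…,xₙ` and sends `x₀` to `x₀ + ℓ_g` with `ℓ_g` a linear
form in `x₁,…,xₙ`), then every Hasse derivative `Δ^i(f)` of an invariant `f` is invariant. -/
theorem hasseDeriv_of_invariant_is_invariant {p : ℕ} (hp : p.Prime) (k : Type*) [Field k]
    [CharP k p] (G : Type*) [Group G] [Finite G] (n : ℕ)
    (ρ : G →* (Polynomial (MvPolynomial (Fin n) k) ≃ₐ[k] Polynomial (MvPolynomial (Fin n) k)))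
    -- the span of `x₁,…,xₙ` is a `G`-submodule of `V^*`
    (hterm : ∀ (g : G) (j : Fin n), ∃ ℓ : MvPolynomial (Fin n) k,
      ℓ.IsHomogeneous 1 ∧ ρ g (Polynomial.C (MvPolynomial.X j)) = Polynomial.C ℓ)
    -- each `g` sends `x₀` to `x₀ + ℓ_g` with `ℓ_g` in the span of `x₁,…,xₙ`
    (hX : ∀ g : G, ∃ ℓ : MvPolynomial (Fin n) k,
      ℓ.IsHomogeneous 1 ∧ ρ g Polynomial.X = Polynomial.X + Polynomial.C ℓ)
    (f : Polynomial (MvPolynomial (Fin n) k)) (hf : ∀ g : G, ρ g f = f) (i : ℕ) (g : G) :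
    ρ g (Polynomial.hasseDeriv i f) = Polynomial.hasseDeriv i f := by
  obtain ⟨c, -, hc⟩ := hX g
  -- every constant is mapped to a constant
  set S : Subalgebra k (MvPolynomial (Fin n) k) :=
    { carrier := {r | ∃ s, ρ g (Polynomial.C r) = Polynomial.C s}
      mul_mem' := by
        rintro a b ⟨s, hs⟩ ⟨t, ht⟩
        exact ⟨s * t, by rw [map_mul, map_mul, hs, ht, map_mul]⟩
      add_mem' := by
        rintro a b ⟨s, hs⟩ ⟨t, ht⟩
        exact ⟨s + t, by rw [map_add, map_add, hs, ht, map_add]⟩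
      algebraMap_mem' := by
        intro a
        refine ⟨algebraMap k _ a, ?_⟩
        rw [← Polynomial.algebraMap_apply, AlgEquiv.commutes, Polynomial.algebraMap_apply] } with hSdef
  have hStop : S = ⊤ := by
    rw [eq_top_iff, ← MvPolynomial.adjoin_range_X]
    refine Algebra.adjoin_le ?_ |>.trans le_rfl
    rintro _ ⟨j, rfl⟩
    obtain ⟨ℓ, -, hℓ⟩ := hterm g j
    exact ⟨ℓ, hℓ⟩
  have hC : ∀ r : MvPolynomial (Fin n) k, ∃ s, ρ g (Polynomial.C r) = Polynomial.C s := by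
    intro r
    have : r ∈ S := hStop ▸ Algebra.mem_top
    exact this
  -- the action commutes with Hasse derivatives
  have key : ∀ q : Polynomial (MvPolynomial (Fin n) k),
      ρ g (Polynomial.hasseDeriv i q) = Polynomial.hasseDeriv i (ρ g q) := by
    intro q
    induction q using Polynomial.induction_on' with
    | add a b ha hb =>
        simp only [map_add, ha, hb]
    | monomial m r =>
        obtain ⟨s, hs⟩ := hC r
        have hmon : ∀ (d : ℕ) (a : MvPolynomial (Fin n) k) (b : MvPolynomial (Fin n) k),
            ρ g (Polynomial.C a) = Polynomial.C b →
            ρ g (Polynomial.monomial d a) = Polynomial.taylor c (Polynomial.monomial d b) := by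
          intro d a b hab
          rw [← Polynomial.C_mul_X_pow_eq_monomial, map_mul, map_pow, hab, hc,
            Polynomial.taylor_monomial]
        have hcast : ρ g (Polynomial.C ((m.choose i : MvPolynomial (Fin n) k) * r)) =
            Polynomial.C ((m.choose i : MvPolynomial (Fin n) k) * s) := by
          simp only [map_mul, Polynomial.C_eq_natCast, map_natCast, hs]
        rw [Polynomial.hasseDeriv_monomial,
          hmon _ _ _ hcast, hmon _ _ _ hs, hasseDeriv_taylor_comm,
          Polynomial.hasseDeriv_monomial]
  rw [key, hf]
end

section
/- Let $\kk$ be a field of characteristic $p > 0$, $G$ a finite $p$-group acting linearly on a finite-dimensional $\kk$-vector space $V$ with dual basis $x_0, \ldots, x_n$ of $V^*$ in which $x_0$ is a terminal variable. Define $d = \deg(x_0)$ to be the minimal positive integer such that there exists $f \in \kk[V]^G$ which, as a polynomial in $x_0$, is monic of degree $d$. Then $d$ is a power of $p$. -/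
/-!
Let `f` be an invariant, monic of minimal degree `d` in `x₀`, and write `e = p ^ r` for the
largest power of `p` with `e ≤ d`. Since `x₀` is terminal, every `g` acts on `k[V]` as
`x₀ ↦ x₀ + ℓ_g` composed with an endomorphism of the coefficient ring `k[x₁, …, xₙ]`, i.e. as a
Taylor shift after a change of coefficients, and both commute with the Hasse derivative
`Δ^e` in `x₀`. So `Δ^e f` is again invariant; its leading coefficient is `d.choose e`, which by
Lucas' theorem is `⌊d / p ^ r⌋ ≢ 0 mod p`. Normalising gives an invariant, monic of degree
`d - e`, so minimality forces `d - e ≤ 0`, i.e. `d = p ^ r`.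
-/

open Polynomial

namespace Nat

theorem choose_prime_pow_modEq_div {p : ℕ} (hp : p.Prime) (d r : ℕ) :
    d.choose (p ^ r) ≡ d / p ^ r [MOD p] := by
  have : Fact p.Prime := ⟨hp⟩
  induction r generalizing d with
  | zero => simp [Nat.ModEq.refl]
  | succ r ih =>
    calc d.choose (p ^ (r + 1))
        ≡ (d % p).choose (p ^ (r + 1) % p) * (d / p).choose (p ^ (r + 1) / p) [MOD p] :=
          Choose.choose_modEq_choose_mod_mul_choose_div_nat
      _ = (d / p).choose (p ^ r) := by
          rw [pow_succ, Nat.mul_mod_left, Nat.choose_zero_right, one_mul,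
            Nat.mul_div_cancel _ hp.pos]
      _ ≡ d / p / p ^ r [MOD p] := ih (d / p)
      _ = d / p ^ (r + 1) := by rw [Nat.div_div_eq_div_mul, pow_succ']

theorem Prime.not_dvd_choose_pow_log {p d : ℕ} (hp : p.Prime) (hd : d ≠ 0) :
    ¬ p ∣ d.choose (p ^ Nat.log p d) := by
  have hlt : d / p ^ Nat.log p d < p := by
    rw [Nat.div_lt_iff_lt_mul (pow_pos hp.pos _), ← pow_succ']
    exact Nat.lt_pow_succ_log_self hp.one_lt d
  have hpos : 0 < d / p ^ Nat.log p d :=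
    Nat.div_pos (Nat.pow_log_le_self p hd) (pow_pos hp.pos _)
  rw [Nat.dvd_iff_mod_eq_zero, choose_prime_pow_modEq_div hp, Nat.mod_eq_of_lt hlt]
  exact hpos.ne'

end Nat

namespace Polynomial

variable {R : Type*} [CommSemiring R]

theorem hasseDeriv_map {S : Type*} [CommSemiring S] (φ : R →+* S) (e : ℕ) (f : R[X]) :
    hasseDeriv e (f.map φ) = (hasseDeriv e f).map φ := by
  ext m
  simp [hasseDeriv_coeff, coeff_map]

theorem hasseDeriv_taylor (c : R) (e : ℕ) (f : R[X]) :
    hasseDeriv e (taylor c f) = taylor c (hasseDeriv e f) := by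
  ext m
  have h := LinearMap.congr_fun (hasseDeriv_comp (R := R) m e) f
  simp only [LinearMap.comp_apply, LinearMap.smul_apply] at h
  rw [hasseDeriv_coeff, taylor_coeff, taylor_coeff, h, eval_smul, nsmul_eq_mul,
    Nat.choose_symm_add]

theorem eq_taylor_map_of_apply_C_of_apply_X (σ : R[X] →+* R[X]) (φ : R →+* R) (c : R)
    (hC : ∀ a, σ (C a) = C (φ a)) (hX : σ X = X + C c) (f : R[X]) :
    σ f = taylor c (f.map φ) := by
  have : σ = (taylorAlgHom c : R[X] →+* R[X]).comp (mapRingHom φ) := by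
    refine ringHom_ext (fun a => ?_) ?_
    · simp [hC]
    · simp [hX]
  exact DFunLike.congr_fun this f

theorem hasseDeriv_apply_of_apply_C_of_apply_X (σ : R[X] →+* R[X]) (φ : R →+* R) (c : R)
    (hC : ∀ a, σ (C a) = C (φ a)) (hX : σ X = X + C c) (e : ℕ) (f : R[X]) :
    hasseDeriv e (σ f) = σ (hasseDeriv e f) := by
  simp only [eq_taylor_map_of_apply_C_of_apply_X σ φ c hC hX, hasseDeriv_taylor, hasseDeriv_map]

theorem Monic.coeff_hasseDeriv_natDegree_sub {f : R[X]} (hf : f.Monic) {e : ℕ}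
    (he : e ≤ f.natDegree) :
    (hasseDeriv e f).coeff (f.natDegree - e) = f.natDegree.choose e := by
  rw [hasseDeriv_coeff, Nat.sub_add_cancel he, hf.coeff_natDegree, mul_one]

theorem Monic.isMonicOfDegree_smul_hasseDeriv [Nontrivial R] {S : Type*} [SMulZeroClass S R]
    {f : R[X]} (hf : f.Monic) {e : ℕ} (he : e ≤ f.natDegree) {u : S}
    (hu : u • (f.natDegree.choose e : R) = 1) :
    (u • hasseDeriv e f).IsMonicOfDegree (f.natDegree - e) := by
  rw [isMonicOfDegree_iff, coeff_smul, hf.coeff_hasseDeriv_natDegree_sub he, hu]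
  exact ⟨(natDegree_smul_le _ _).trans (natDegree_hasseDeriv_le f e), rfl⟩

end Polynomial

namespace MvPolynomial

variable {ι k F : Type*} [CommSemiring k]
  [FunLike F (MvPolynomial ι k)[X] (MvPolynomial ι k)[X]]
  [AlgHomClass F k (MvPolynomial ι k)[X] (MvPolynomial ι k)[X]] (σ : F)
  (ℓ : ι → MvPolynomial ι k)

theorem apply_polynomialC_eq_C_aeval (hℓ : ∀ j, σ (Polynomial.C (X j)) = Polynomial.C (ℓ j))
    (q : MvPolynomial ι k) :
    σ (Polynomial.C q) = Polynomial.C (aeval ℓ q) := by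
  let incl : MvPolynomial ι k →ₐ[k] (MvPolynomial ι k)[X] := IsScalarTower.toAlgHom _ _ _
  have : (AlgHomClass.toAlgHom σ).comp incl = incl.comp (aeval ℓ) :=
    algHom_ext fun j => by simp [incl, hℓ]
  exact DFunLike.congr_fun this q

theorem hasseDeriv_apply_of_apply_polynomialX
    (hℓ : ∀ j, σ (Polynomial.C (X j)) = Polynomial.C (ℓ j)) (c : MvPolynomial ι k)
    (hc : σ Polynomial.X = Polynomial.X + Polynomial.C c) (e : ℕ) (f : (MvPolynomial ι k)[X]) :
    hasseDeriv e (σ f) = σ (hasseDeriv e f) :=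
  hasseDeriv_apply_of_apply_C_of_apply_X (RingHomClass.toRingHom σ) (aeval ℓ).toRingHom c
    (apply_polynomialC_eq_C_aeval σ ℓ hℓ) hc e f

end MvPolynomial

theorem degree_of_terminal_variable_is_p_power_general {p : ℕ} (hp : p.Prime) (k : Type*) [Field k]
    [CharP k p] (G : Type*) [Group G] (n : ℕ)
    (ρ : G →* (Polynomial (MvPolynomial (Fin n) k) ≃ₐ[k] Polynomial (MvPolynomial (Fin n) k)))
    (hterm : ∀ (g : G) (j : Fin n), ∃ ℓ : MvPolynomial (Fin n) k,
      ℓ.IsHomogeneous 1 ∧ ρ g (Polynomial.C (MvPolynomial.X j)) = Polynomial.C ℓ)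
    (hX : ∀ g : G, ∃ ℓ : MvPolynomial (Fin n) k,
      ℓ.IsHomogeneous 1 ∧ ρ g Polynomial.X = Polynomial.X + Polynomial.C ℓ)
    (d : ℕ) (hd0 : 0 < d)
    -- there is an invariant, monic of degree `d` as a polynomial in `x₀`
    (hdex : ∃ f : Polynomial (MvPolynomial (Fin n) k),
      (∀ g : G, ρ g f = f) ∧ f.Monic ∧ f.natDegree = d)
    -- and `d` is minimal with this property
    (hdmin : ∀ e : ℕ, 0 < e → (∃ f : Polynomial (MvPolynomial (Fin n) k),
      (∀ g : G, ρ g f = f) ∧ f.Monic ∧ f.natDegree = e) → d ≤ e) :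
    ∃ r : ℕ, d = p ^ r := by
  refine ⟨Nat.log p d, le_antisymm ?_ (Nat.pow_log_le_self p hd0.ne')⟩
  by_contra! hlt
  obtain ⟨f, hf_inv, hf_monic, rfl⟩ := hdex
  set e := p ^ Nat.log p f.natDegree
  have hb : (f.natDegree.choose e : k) ≠ 0 := by
    rw [Ne, CharP.cast_eq_zero_iff k p]
    exact hp.not_dvd_choose_pow_log hd0.ne'
  set F := (f.natDegree.choose e : k)⁻¹ • hasseDeriv e f
  have hF : F.IsMonicOfDegree (f.natDegree - e) :=
    hf_monic.isMonicOfDegree_smul_hasseDeriv hlt.le <| by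
      rw [← map_natCast (algebraMap k (MvPolynomial (Fin n) k)), Algebra.smul_def, ← map_mul,
        inv_mul_cancel₀ hb, map_one]
  have hF_inv : ∀ g, ρ g F = F := by
    intro g
    obtain ⟨c, -, hc⟩ := hX g
    choose ℓ _ hℓ using hterm g
    rw [map_smul, ← MvPolynomial.hasseDeriv_apply_of_apply_polynomialX (ρ g) ℓ hℓ c hc, hf_inv]
  have hle := hdmin _ (Nat.sub_pos_of_lt hlt) ⟨F, hF_inv, hF.monic, hF.natDegree_eq⟩
  have he : 0 < e := pow_pos hp.pos _
  omega

/-- For a finite `p`-group `G` acting linearly on `V` with terminal variable `x₀`,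
the degree `d = deg(x₀)` (the minimal positive degree in `x₀` of an invariant that is
monic as a polynomial in `x₀`) is a power of `p`. -/
theorem degree_of_terminal_variable_is_p_power {p : ℕ} (hp : p.Prime) (k : Type*) [Field k]
    [CharP k p] (G : Type*) [Group G] [Finite G] (hG : IsPGroup p G) (n : ℕ)
    (ρ : G →* (Polynomial (MvPolynomial (Fin n) k) ≃ₐ[k] Polynomial (MvPolynomial (Fin n) k)))
    (hterm : ∀ (g : G) (j : Fin n), ∃ ℓ : MvPolynomial (Fin n) k,
      ℓ.IsHomogeneous 1 ∧ ρ g (Polynomial.C (MvPolynomial.X j)) = Polynomial.C ℓ)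
    (hX : ∀ g : G, ∃ ℓ : MvPolynomial (Fin n) k,
      ℓ.IsHomogeneous 1 ∧ ρ g Polynomial.X = Polynomial.X + Polynomial.C ℓ)
    (d : ℕ) (hd0 : 0 < d)
    -- there is an invariant, monic of degree `d` as a polynomial in `x₀`
    (hdex : ∃ f : Polynomial (MvPolynomial (Fin n) k),
      (∀ g : G, ρ g f = f) ∧ f.Monic ∧ f.natDegree = d)
    -- and `d` is minimal with this property
    (hdmin : ∀ e : ℕ, 0 < e → (∃ f : Polynomial (MvPolynomial (Fin n) k),
      (∀ g : G, ρ g f = f) ∧ f.Monic ∧ f.natDegree = e) → d ≤ e) :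
    ∃ r : ℕ, d = p ^ r :=
  degree_of_terminal_variable_is_p_power_general hp k G n ρ hterm hX d hd0 hdex hdmin
end

section
/- Let $\kk$ be a field of characteristic $2$ and $H = \langle \sigma, \tau \rangle$ the Klein four-group acting as in the paper's example on $\kk[x_1, \ldots, x_m, y_1, \ldots, y_{m+1}]$ with $m \geq 3$ ($\sigma(y_j) = y_j + x_j$, $\tau(y_j) = y_j + x_{j-1}$, $x_j$ fixed, $x_0 = x_m = 0$). Then the stabilizer of $y_2$ in $H$ is trivial, so the orbit $H \cdot y_2$ has $4$ elements and $N^H(y_2) = \prod_{h \in H\cdot y_2} h$ has degree $4$, while there exists an $H$-invariant polynomial monic of degree $2$ in $y_2$; hence $\deg(y_2) = 2 < 4 = \deg N^H(y_2)$. -/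
/-- The variable `x_j` (for `1 ≤ j ≤ m`) of the paper's Klein four-group example, with the
convention that indices outside the range `1 ≤ j < m` (in particular `x₀` and `x_m`) give `0`. -/
noncomputable def kleinX (k : Type*) [Field k] (m : ℕ) (j : ℕ) :
    MvPolynomial (Fin m ⊕ Fin (m + 1)) k :=
  if h : 1 ≤ j ∧ j < m then MvPolynomial.X (Sum.inl ⟨j - 1, by omega⟩) else 0

/-- The variable `y_j` (for `1 ≤ j ≤ m+1`) of the paper's Klein four-group example. -/
noncomputable def kleinY (k : Type*) [Field k] (m : ℕ) (j : ℕ) :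
    MvPolynomial (Fin m ⊕ Fin (m + 1)) k :=
  if h : 1 ≤ j ∧ j ≤ m + 1 then MvPolynomial.X (Sum.inr ⟨j - 1, by omega⟩) else 0

/-- The action of `σ`: `σ(y_j) = y_j + x_j`, `σ(x_j) = x_j`. -/
noncomputable def kleinSigma (k : Type*) [Field k] (m : ℕ) :
    MvPolynomial (Fin m ⊕ Fin (m + 1)) k →ₐ[k] MvPolynomial (Fin m ⊕ Fin (m + 1)) k :=
  MvPolynomial.aeval (Sum.elim (fun i : Fin m => MvPolynomial.X (Sum.inl i))
    (fun i : Fin (m + 1) => MvPolynomial.X (Sum.inr i) + kleinX k m (i.1 + 1)))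

/-- The action of `τ`: `τ(y_j) = y_j + x_{j-1}`, `τ(x_j) = x_j`. -/
noncomputable def kleinTau (k : Type*) [Field k] (m : ℕ) :
    MvPolynomial (Fin m ⊕ Fin (m + 1)) k →ₐ[k] MvPolynomial (Fin m ⊕ Fin (m + 1)) k :=
  MvPolynomial.aeval (Sum.elim (fun i : Fin m => MvPolynomial.X (Sum.inl i))
    (fun i : Fin (m + 1) => MvPolynomial.X (Sum.inr i) + kleinX k m i.1))

/-- A polynomial `g` is "monic of degree `d` in the variable `v`" if its degree in `v`
is `d`, the only monomial of `g` of `v`-degree `d` is the pure power `v^d`, and that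
monomial has coefficient `1`. -/
def MonicInVarOfDeg {k : Type*} [Field k] {σ : Type*} (v : σ) (d : ℕ)
    (g : MvPolynomial σ k) : Prop :=
  MvPolynomial.degreeOf v g = d ∧
    (∀ mo ∈ g.support, mo v = d → mo = Finsupp.single v d) ∧
    MvPolynomial.coeff (Finsupp.single v d) g = 1

/-!
Both generators translate `y₂`: `σ y₂ = y₂ + x₂` and `τ y₂ = y₂ + x₁`, so the orbit of `y₂` is
`y₂ + {0, x₂, x₁, x₂ + x₁}`, four distinct polynomials of degree one in `y₂`, and their product has
`y₂`-degree `4`. In characteristic `2` the polynomial `y₂² + (x₂ + x₁) y₂ + x₂ y₁ + x₁ y₃ + y₁ x₃`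
is invariant and monic of degree `2` in `y₂`. Degree `1` is impossible: at the point where `x₂ = 1`
and all other variables vanish, `σ` acts as the translation `y₂ ↦ y₂ + 1`, which changes the value
of any `g = y₂ + (terms free of y₂)` by `1`, so such a `g` is not `σ`-invariant.
-/

open MvPolynomial Finset

theorem card_translates_eq_four {G : Type*} [AddCancelCommMonoid G] [DecidableEq G]
    (a b c : G) (hb : b ≠ 0) (hc : c ≠ 0) (hbc : b ≠ c) (hbc0 : b + c ≠ 0) :
    ({a, a + b, a + c, a + b + c} : Finset G).card = 4 := by
  simp only [add_assoc]
  rw [card_insert_of_notMem, card_insert_of_notMem, card_insert_of_notMem, card_singleton]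
  all_goals simp [hb, hc, hbc, hbc0]

namespace MvPolynomial

variable {R σ : Type*}

theorem X_add_X_ne_zero [CommSemiring R] [Nontrivial R] {i j : σ} (hij : i ≠ j) :
    (X i + X j : MvPolynomial σ R) ≠ 0 := by
  classical
  intro h
  simpa [coeff_X, Finsupp.single_left_inj one_ne_zero, hij.symm] using
    congrArg (coeff (Finsupp.single i 1)) h

theorem degreeOf_eq_zero_of_mem_supported [CommSemiring R] {v : σ} {p : MvPolynomial σ R}
    (hp : p ∈ supported R {v}ᶜ) : degreeOf v p = 0 := by
  by_contra h
  exact (mem_supported.mp hp (mem_vars_iff_degreeOf_ne_zero.mpr h)) rfl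

theorem degreeOf_X_add_of_mem_supported [CommSemiring R] [Nontrivial R] {v : σ}
    {p : MvPolynomial σ R} (hp : p ∈ supported R {v}ᶜ) : degreeOf v (X v + p) = 1 := by
  rw [degreeOf_add_eq_of_degreeOf_lt] <;> simp [degreeOf_eq_zero_of_mem_supported hp]

theorem degreeOf_prod_eq_card [CommSemiring R] [NoZeroDivisors R] {v : σ}
    (s : Finset (MvPolynomial σ R)) (hs : ∀ f ∈ s, degreeOf v f = 1) :
    degreeOf v (∏ f ∈ s, f) = #s := by
  rw [degreeOf_prod_eq s (fun f => f) fun f hf h0 => by simpa [h0] using hs f hf]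
  simp [sum_congr rfl hs]

theorem eval_algHom_apply [CommRing R] (φ : MvPolynomial σ R →ₐ[R] MvPolynomial σ R)
    (p : σ → R) (f : MvPolynomial σ R) :
    eval p (φ f) = eval (fun i => eval p (φ (X i))) f := by
  conv_lhs => rw [aeval_unique φ]
  simpa using comp_aeval_apply (f := ⇑φ ∘ X) (aeval p) f

end MvPolynomial

namespace MonicInVarOfDeg

variable {k σ : Type*} [Field k] {v : σ} {g : MvPolynomial σ k}

theorem degreeOf_sub_X_eq_zero (hg : MonicInVarOfDeg v 1 g) : degreeOf v (g - X v) = 0 := by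
  classical
  obtain ⟨hdeg, hmono, hcoeff⟩ := hg
  refine Nat.le_zero.mp (degreeOf_le_iff.mpr fun mo hmo => ?_)
  rw [mem_support_iff, coeff_sub, coeff_X] at hmo
  by_cases hmo1 : Finsupp.single v 1 = mo
  · subst hmo1
    simp [hcoeff] at hmo
  · rw [if_neg hmo1, sub_zero, ← mem_support_iff] at hmo
    have hle : mo v ≤ 1 := hdeg ▸ monomial_le_degreeOf v hmo
    have hne : mo v ≠ 1 := fun h => hmo1 (hmono mo hmo h).symm
    omega

theorem eval_update_add [DecidableEq σ] (hg : MonicInVarOfDeg v 1 g) (p : σ → k) (t : k) :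
    eval (Function.update p v (p v + t)) g = eval p g + t := by
  have hfree : eval (Function.update p v (p v + t)) (g - X v) = eval p (g - X v) := by
    refine eval₂_congr _ _ _ fun {i c} hi hc => Function.update_of_ne ?_ _ _
    rintro rfl
    have := monomial_le_degreeOf i (mem_support_iff.mpr hc)
    rw [hg.degreeOf_sub_X_eq_zero] at this
    exact Finsupp.mem_support_iff.mp hi (Nat.le_zero.mp this)
  rw [← sub_add_cancel g (X v), map_add, map_add, hfree]
  simp only [eval_X, Function.update_self]
  ring

end MonicInVarOfDeg

theorem monicInVarOfDeg_X_pow_add {k σ : Type*} [Field k] {v : σ} {d : ℕ}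
    {r : MvPolynomial σ k} (hr : degreeOf v r < d) : MonicInVarOfDeg v d (X v ^ d + r) := by
  classical
  have hr_lt : ∀ mo ∈ r.support, mo v < d := fun mo hmo =>
    (monomial_le_degreeOf v hmo).trans_lt hr
  have hcoeff : coeff (Finsupp.single v d) r = 0 :=
    notMem_support_iff.mp fun h => (hr_lt _ h).ne (by simp)
  refine ⟨by rw [degreeOf_add_eq_of_degreeOf_lt] <;> simp [hr], fun mo hmo hmov => ?_,
    by simp [coeff_X_pow, hcoeff]⟩
  rcases Finset.mem_union.mp (support_add hmo) with h | h
  · simpa [support_X_pow] using h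
  · exact absurd hmov (hr_lt mo h).ne

theorem not_monicInVarOfDeg_one_of_eval_shift {k σ : Type*} [Field k] [DecidableEq σ] {v : σ}
    {φ : MvPolynomial σ k →ₐ[k] MvPolynomial σ k} {g : MvPolynomial σ k} (hg : φ g = g)
    (p : σ → k) (hφ : (fun i => eval p (φ (X i))) = Function.update p v (p v + 1)) :
    ¬ MonicInVarOfDeg v 1 g := fun hmonic => by
  have h := congrArg (eval p) hg
  rw [eval_algHom_apply, hφ, hmonic.eval_update_add] at h
  exact one_ne_zero (add_eq_left.mp h)

section KleinFour

variable {k : Type*} [Field k] {m : ℕ}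

theorem kleinX_zero : kleinX k m 0 = 0 := dif_neg (by omega)

theorem kleinX_of_lt {j : ℕ} (h1 : 1 ≤ j) (h2 : j < m) :
    kleinX k m j = X (Sum.inl ⟨j - 1, by omega⟩) := dif_pos ⟨h1, h2⟩

theorem kleinY_of_le {j : ℕ} (h1 : 1 ≤ j) (h2 : j ≤ m + 1) :
    kleinY k m j = X (Sum.inr ⟨j - 1, by omega⟩) := dif_pos ⟨h1, h2⟩

@[simp]
theorem kleinSigma_X_inl (i : Fin m) : kleinSigma k m (X (Sum.inl i)) = X (Sum.inl i) := by
  simp [kleinSigma]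

@[simp]
theorem kleinTau_X_inl (i : Fin m) : kleinTau k m (X (Sum.inl i)) = X (Sum.inl i) := by
  simp [kleinTau]

theorem kleinSigma_X_inr (i : Fin (m + 1)) :
    kleinSigma k m (X (Sum.inr i)) = X (Sum.inr i) + kleinX k m (i + 1) := by
  simp [kleinSigma]

theorem kleinTau_X_inr (i : Fin (m + 1)) :
    kleinTau k m (X (Sum.inr i)) = X (Sum.inr i) + kleinX k m i := by
  simp [kleinTau]

theorem kleinX_ne_zero {j : ℕ} (h1 : 1 ≤ j) (h2 : j < m) : kleinX k m j ≠ 0 := by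
  rw [kleinX_of_lt h1 h2]
  exact X_ne_zero _

theorem kleinX_ne_kleinX {i j : ℕ} (hi : 1 ≤ i) (hj : 1 ≤ j) (hi' : i < m) (hj' : j < m)
    (hij : i ≠ j) : kleinX k m i ≠ kleinX k m j := by
  rw [kleinX_of_lt hi hi', kleinX_of_lt hj hj']
  exact X_injective.ne (by simp [Fin.ext_iff]; omega)

theorem kleinX_add_kleinX_ne_zero {i j : ℕ} (hi : 1 ≤ i) (hj : 1 ≤ j) (hi' : i < m)
    (hj' : j < m) (hij : i ≠ j) : kleinX k m i + kleinX k m j ≠ 0 := by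
  rw [kleinX_of_lt hi hi', kleinX_of_lt hj hj']
  exact X_add_X_ne_zero (by simp [Fin.ext_iff]; omega)

theorem kleinSigma_kleinX (j : ℕ) : kleinSigma k m (kleinX k m j) = kleinX k m j := by
  unfold kleinX; split <;> simp

theorem kleinTau_kleinX (j : ℕ) : kleinTau k m (kleinX k m j) = kleinX k m j := by
  unfold kleinX; split <;> simp

theorem kleinSigma_kleinY {j : ℕ} (h1 : 1 ≤ j) (h2 : j ≤ m + 1) :
    kleinSigma k m (kleinY k m j) = kleinY k m j + kleinX k m j := by
  rw [kleinY_of_le h1 h2, kleinSigma_X_inr, Nat.sub_add_cancel h1]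

theorem kleinTau_kleinY {j : ℕ} (h1 : 1 ≤ j) (h2 : j ≤ m + 1) :
    kleinTau k m (kleinY k m j) = kleinY k m j + kleinX k m (j - 1) := by
  rw [kleinY_of_le h1 h2, kleinTau_X_inr]

theorem kleinX_mem_supported (j : ℕ) (i : Fin (m + 1)) :
    kleinX k m j ∈ supported k {Sum.inr i}ᶜ := by
  unfold kleinX; split
  · exact X_mem_supported.mpr (by simp)
  · exact zero_mem _

theorem kleinY_mem_supported {j : ℕ} {i : Fin (m + 1)} (hj : j ≠ i + 1) :
    kleinY k m j ∈ supported k {Sum.inr i}ᶜ := by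
  unfold kleinY; split
  · exact X_mem_supported.mpr (by simp [Fin.ext_iff]; omega)
  · exact zero_mem _

variable (k m) in
noncomputable def kleinInvariant : MvPolynomial (Fin m ⊕ Fin (m + 1)) k :=
  kleinY k m 2 ^ 2 + (kleinX k m 2 + kleinX k m 1) * kleinY k m 2 + kleinX k m 2 * kleinY k m 1 +
    kleinX k m 1 * kleinY k m 3 + kleinY k m 1 * kleinX k m 3

theorem kleinSigma_kleinInvariant [CharP k 2] (hm : 2 ≤ m) :
    kleinSigma k m (kleinInvariant k m) = kleinInvariant k m := by
  simp (disch := omega) only [kleinInvariant, map_add, map_mul, map_pow, kleinSigma_kleinX,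
    kleinSigma_kleinY]
  linear_combination (kleinX k m 2 * kleinY k m 2 + kleinX k m 2 ^ 2 +
    kleinX k m 1 * kleinX k m 2 + kleinX k m 1 * kleinX k m 3) *
      CharTwo.two_eq_zero (R := MvPolynomial (Fin m ⊕ Fin (m + 1)) k)

theorem kleinTau_kleinInvariant [CharP k 2] (hm : 2 ≤ m) :
    kleinTau k m (kleinInvariant k m) = kleinInvariant k m := by
  simp (disch := omega) only [kleinInvariant, map_add, map_mul, map_pow, kleinTau_kleinX,
    kleinTau_kleinY, Nat.reduceSub, kleinX_zero]
  linear_combination (kleinX k m 1 * kleinY k m 2 + kleinX k m 1 ^ 2 +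
    kleinX k m 1 * kleinX k m 2) * CharTwo.two_eq_zero (R := MvPolynomial (Fin m ⊕ Fin (m + 1)) k)

theorem monicInVarOfDeg_kleinInvariant (hm : 0 < m) :
    MonicInVarOfDeg (Sum.inr (⟨1, by omega⟩ : Fin (m + 1))) 2 (kleinInvariant k m) := by
  set y₂ : Fin m ⊕ Fin (m + 1) := Sum.inr ⟨1, by omega⟩
  set s :=
    kleinX k m 2 * kleinY k m 1 + kleinX k m 1 * kleinY k m 3 + kleinY k m 1 * kleinX k m 3
  have hs : s ∈ supported k {y₂}ᶜ :=
    add_mem (add_mem (mul_mem (kleinX_mem_supported _ _) (kleinY_mem_supported (by simp)))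
      (mul_mem (kleinX_mem_supported _ _) (kleinY_mem_supported (by simp))))
      (mul_mem (kleinY_mem_supported (by simp)) (kleinX_mem_supported _ _))
  have hx : kleinX k m 2 + kleinX k m 1 ∈ supported k {y₂}ᶜ :=
    add_mem (kleinX_mem_supported _ _) (kleinX_mem_supported _ _)
  have hinv : kleinInvariant k m = X y₂ ^ 2 + ((kleinX k m 2 + kleinX k m 1) * X y₂ + s) := by
    rw [kleinInvariant, kleinY_of_le (j := 2) (by omega) (by omega)]
    ring
  rw [hinv]
  refine monicInVarOfDeg_X_pow_add ((degreeOf_add_le _ _ _).trans_lt (max_lt ?_ ?_))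
  · refine (degreeOf_mul_le _ _ _).trans_lt ?_
    simp [degreeOf_eq_zero_of_mem_supported hx]
  · simp [degreeOf_eq_zero_of_mem_supported hs]

theorem eval_single_kleinX (hm : 2 < m) (j : ℕ) :
    eval (Pi.single (Sum.inl ⟨1, by omega⟩) 1) (kleinX k m j) = if j = 2 then 1 else 0 := by
  unfold kleinX
  split_ifs <;> simp_all [Fin.ext_iff]

theorem not_monicInVarOfDeg_one_of_kleinSigma (hm : 2 < m)
    {g : MvPolynomial (Fin m ⊕ Fin (m + 1)) k} (hg : kleinSigma k m g = g) :
    ¬ MonicInVarOfDeg (Sum.inr (⟨1, by omega⟩ : Fin (m + 1))) 1 g := by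
  refine not_monicInVarOfDeg_one_of_eval_shift hg (Pi.single (Sum.inl ⟨1, by omega⟩) 1) ?_
  funext i
  rcases i with i | i
  · simp
  · simp [kleinSigma_X_inr, eval_single_kleinX hm, Function.update_apply, Fin.ext_iff]

theorem sInf_degree_monic_invariant_eq_two [CharP k 2] (hm : 2 < m) :
    sInf {d : ℕ | 0 < d ∧ ∃ g : MvPolynomial (Fin m ⊕ Fin (m + 1)) k,
        kleinSigma k m g = g ∧ kleinTau k m g = g ∧
        MonicInVarOfDeg (Sum.inr (⟨1, by omega⟩ : Fin (m + 1))) d g} = 2 := by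
  have h₂ : 2 ∈ {d : ℕ | 0 < d ∧ ∃ g : MvPolynomial (Fin m ⊕ Fin (m + 1)) k,
      kleinSigma k m g = g ∧ kleinTau k m g = g ∧
      MonicInVarOfDeg (Sum.inr (⟨1, by omega⟩ : Fin (m + 1))) d g} :=
    ⟨two_pos, kleinInvariant k m, kleinSigma_kleinInvariant (by omega),
      kleinTau_kleinInvariant (by omega), monicInVarOfDeg_kleinInvariant (by omega)⟩
  refine le_antisymm (Nat.sInf_le h₂) (le_csInf ⟨2, h₂⟩ ?_)
  rintro d ⟨hd, g, hgσ, -, hg⟩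
  have hd1 : d ≠ 1 := by
    rintro rfl
    exact not_monicInVarOfDeg_one_of_kleinSigma hm hgσ hg
  omega

end KleinFour

open scoped Classical in
/-- In the Klein four-group example (char `2`, `m ≥ 3`): the stabilizer of `y₂` in
`H = ⟨σ,τ⟩` is trivial, so its orbit has `4` elements and the orbit product `N^H(y₂)`
has degree `4` in `y₂`, while `deg(y₂)` — the least positive `d` for which some
`H`-invariant polynomial is monic of degree `d` in `y₂` — equals `2`. -/
theorem klein_four_terminal_variable_degree_lt_norm_degree (k : Type*) [Field k]
    [CharP k 2] (m : ℕ) (hm : 3 ≤ m) :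
    kleinSigma k m (kleinY k m 2) ≠ kleinY k m 2 ∧
    kleinTau k m (kleinY k m 2) ≠ kleinY k m 2 ∧
    kleinSigma k m (kleinTau k m (kleinY k m 2)) ≠ kleinY k m 2 ∧
    ({kleinY k m 2, kleinSigma k m (kleinY k m 2), kleinTau k m (kleinY k m 2),
        kleinSigma k m (kleinTau k m (kleinY k m 2))} :
          Finset (MvPolynomial (Fin m ⊕ Fin (m + 1)) k)).card = 4 ∧
    MvPolynomial.degreeOf (Sum.inr (⟨1, by omega⟩ : Fin (m + 1)))
      (∏ h ∈ ({kleinY k m 2, kleinSigma k m (kleinY k m 2), kleinTau k m (kleinY k m 2),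
          kleinSigma k m (kleinTau k m (kleinY k m 2))} :
            Finset (MvPolynomial (Fin m ⊕ Fin (m + 1)) k)), h) = 4 ∧
    sInf {d : ℕ | 0 < d ∧ ∃ g : MvPolynomial (Fin m ⊕ Fin (m + 1)) k,
        kleinSigma k m g = g ∧ kleinTau k m g = g ∧
        MonicInVarOfDeg (Sum.inr (⟨1, by omega⟩ : Fin (m + 1))) d g} = 2 := by
  have hy₂ : kleinY k m 2 = X (Sum.inr ⟨1, by omega⟩) := kleinY_of_le (by omega) (by omega)
  simp only [hy₂, kleinSigma_X_inr, kleinTau_X_inr, map_add, kleinSigma_kleinX, Nat.reduceAdd]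
  have hx₁ : kleinX k m 1 ≠ 0 := kleinX_ne_zero le_rfl (by omega)
  have hx₂ : kleinX k m 2 ≠ 0 := kleinX_ne_zero (by omega) hm
  have hsum : kleinX k m 2 + kleinX k m 1 ≠ 0 :=
    kleinX_add_kleinX_ne_zero (by omega) le_rfl hm (by omega) (by omega)
  have hcard := card_translates_eq_four (X (Sum.inr ⟨1, by omega⟩)) _ _ hx₂ hx₁
    (kleinX_ne_kleinX (by omega) le_rfl hm (by omega) (by omega)) hsum
  refine ⟨add_ne_left.mpr hx₂, add_ne_left.mpr hx₁,
    by rw [add_assoc]; exact add_ne_left.mpr hsum, hcard, ?_,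
    sInf_degree_monic_invariant_eq_two hm⟩
  rw [degreeOf_prod_eq_card _ ?_, hcard]
  simp only [Finset.mem_insert, Finset.mem_singleton]
  rintro f (rfl | rfl | rfl | rfl)
  · exact degreeOf_X_self _
  · exact degreeOf_X_add_of_mem_supported (kleinX_mem_supported 2 _)
  · exact degreeOf_X_add_of_mem_supported (kleinX_mem_supported 1 _)
  · rw [add_assoc]
    exact degreeOf_X_add_of_mem_supported
      (add_mem (kleinX_mem_supported 2 _) (kleinX_mem_supported 1 _))
end

section
/- Let $\kk$ be a field of characteristic $p$, $G$ a finite $p$-group acting linearly on $V$ with dual basis $x_0, \ldots, x_n$ of $V^*$ where $x_0$ is a terminal variable of degree $d$ (the minimal positive $x_0$-degree of an invariant monic in $x_0$). If $f \in \kk[V]^G$ is a homogeneous invariant of positive degree, then for every $0 \le j < d$ the coefficient in $f$ of the pure power monomial $x_0^j$ is zero. -/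
/-- If `x₀` is a terminal variable of degree `d` and `f` is a homogeneous invariant of
positive (total) degree, then for every `j < d` the coefficient in `f` of the pure power
monomial `x₀^j` is zero. Here `k[x₀,…,xₙ]` is viewed as `(k[x₁,…,xₙ])[x₀]`, and the
coefficient of `x₀^j` in `f` is the constant term of `f.coeff j`. -/
theorem coeff_pure_power_eq_zero {p : ℕ} (hp : p.Prime) (k : Type*) [Field k]
    [CharP k p] (G : Type*) [Group G] [Finite G] (hG : IsPGroup p G) (n : ℕ)
    (ρ : G →* (Polynomial (MvPolynomial (Fin n) k) ≃ₐ[k] Polynomial (MvPolynomial (Fin n) k)))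
    (hterm : ∀ (g : G) (j : Fin n), ∃ ℓ : MvPolynomial (Fin n) k,
      ℓ.IsHomogeneous 1 ∧ ρ g (Polynomial.C (MvPolynomial.X j)) = Polynomial.C ℓ)
    (hX : ∀ g : G, ∃ ℓ : MvPolynomial (Fin n) k,
      ℓ.IsHomogeneous 1 ∧ ρ g Polynomial.X = Polynomial.X + Polynomial.C ℓ)
    (d : ℕ) (hd0 : 0 < d)
    (hdex : ∃ f : Polynomial (MvPolynomial (Fin n) k),
      (∀ g : G, ρ g f = f) ∧ f.Monic ∧ f.natDegree = d)
    (hdmin : ∀ e : ℕ, 0 < e → (∃ f : Polynomial (MvPolynomial (Fin n) k),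
      (∀ g : G, ρ g f = f) ∧ f.Monic ∧ f.natDegree = e) → d ≤ e)
    (f : Polynomial (MvPolynomial (Fin n) k)) (hfinv : ∀ g : G, ρ g f = f)
    -- `f` is homogeneous of positive total degree `D`
    (D : ℕ) (hD : 0 < D)
    (hfhom : ∀ i : ℕ, (f.coeff i).IsHomogeneous (D - i) ∧ (D < i → f.coeff i = 0)) :
    ∀ j : ℕ, j < d → MvPolynomial.constantCoeff (f.coeff j) = 0 := by
  intro j hj
  rcases lt_trichotomy j D with h | h | h
  · -- j < D : the coefficient is homogeneous of positive degree
    have hh := (hfhom j).1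
    have hne : (0 : Fin n →₀ ℕ).degree ≠ D - j := by
      simp [map_zero]
      omega
    simpa [MvPolynomial.constantCoeff_eq, MvPolynomial.coeff] using hh.coeff_eq_zero hne
  · -- j = D : otherwise we get an invariant monic of degree D < d
    subst h
    by_contra hc
    set c : k := MvPolynomial.constantCoeff (f.coeff j) with hcdef
    -- f.coeff j is homogeneous of degree 0, hence a constant
    have hh := (hfhom j).1
    rw [Nat.sub_self] at hh
    have hC : f.coeff j = MvPolynomial.C c := by
      ext m
      rcases eq_or_ne m 0 with rfl | hm
      · simp [hcdef, MvPolynomial.constantCoeff_eq]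
      · have hmd : m.degree ≠ 0 := by
          simpa [Finsupp.degree_eq_zero_iff] using hm
        rw [hh.coeff_eq_zero hmd, MvPolynomial.coeff_C, if_neg (Ne.symm hm)]
    -- f has natDegree j
    have hcoeffne : f.coeff j ≠ 0 := by
      simp only [hC, ne_eq, MvPolynomial.C_eq_zero]
      exact hc
    have hndle : f.natDegree ≤ j := by
      rw [Polynomial.natDegree_le_iff_coeff_eq_zero]
      exact fun m hm => (hfhom m).2 hm
    have hnd : f.natDegree = j :=
      le_antisymm hndle (Polynomial.le_natDegree_of_ne_zero hcoeffne)
    -- rescale to get an invariant monic of degree j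
    set g : Polynomial (MvPolynomial (Fin n) k) :=
      f * Polynomial.C (MvPolynomial.C c⁻¹) with hgdef
    have hgc : g.coeff j = 1 := by
      rw [hgdef, Polynomial.coeff_mul_C, hC, ← MvPolynomial.C_mul,
        mul_inv_cancel₀ hc, MvPolynomial.C_1]
    have hgnd : g.natDegree = j := by
      refine le_antisymm ?_ (Polynomial.le_natDegree_of_ne_zero (by rw [hgc]; exact one_ne_zero))
      calc g.natDegree ≤ f.natDegree + (Polynomial.C (MvPolynomial.C c⁻¹)).natDegree :=
            Polynomial.natDegree_mul_le
        _ ≤ j := by simp [hnd]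
    have hgmonic : g.Monic := by
      unfold Polynomial.Monic Polynomial.leadingCoeff
      rw [hgnd, hgc]
    have hginv : ∀ g' : G, ρ g' g = g := by
      intro g'
      have halg : Polynomial.C (MvPolynomial.C c⁻¹) =
          algebraMap k (Polynomial (MvPolynomial (Fin n) k)) c⁻¹ := rfl
      rw [hgdef, map_mul, hfinv g', halg, AlgEquiv.commutes]
    have := hdmin j hD ⟨g, hginv, hgmonic, hgnd⟩
    omega
  · -- j > D : the coefficient vanishes
    rw [(hfhom j).2 h]
    simp
end
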